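/- arXiv:2009.06111 — 3 statements merged into one kernel-verified Lean document; each statement's English description precedes it below -/
import Mathlib

section
/- Let $\theta \in \mathbb{R}^d$, let $\delta_1,\dots,\delta_d \in (0,1)$, and let $A:\mathbb{R}\to\mathbb{R}$ be convex and continuous. For $j=1,\dots,d$ let $\mathcal{Q}_j(\delta_j)$ denote the set of Borel probability measures on $[0,(1-\delta_j)^{-1}]$ with mean $1$. Then $\sup\{\mathbb{E}_{\mathbb{Q}_1\otimes\cdots\otimes\mathbb{Q}_d}[A(\theta^\top\xi)] : \mathbb{Q}_j \in \mathcal{Q}_j(\delta_j)\} = \mathbb{E}_{\mathbb{Q}_1^\star\otimes\cdots\otimes\mathbb{Q}_d^\star}[A(\theta^\top\xi)]$, where $\mathbb{Q}_j^\star$ places mass $\delta_j$ at $0$ and mass $1-\delta_j$ at $(1-\delta_j)^{-1}$. -/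
/-!
A convex function on `[0, M]` lies below its chord through `(0, f 0)` and `(M, f M)`; integrating
against a law on `[0, M]` with mean `1` bounds `𝔼 f` by the value of the chord at `1`, which is
`𝔼 f` under the two-point law on `{0, M}` with mean `1`, the scaled Bernoulli law for
`M = (1 - δ)⁻¹`. The function `ξ ↦ A (θ ⬝ᵥ ξ)` is convex, hence so are its slices in the first
coordinate and in the remaining ones; by Fubini the first coordinate can be switched to its scaled
Bernoulli law, and induction on the dimension switches the others.
-/

open MeasureTheory Set

/-- The scaled Bernoulli distribution placing mass `δ` at `0` and mass `1-δ` at `(1-δ)⁻¹`. -/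
noncomputable def scaledBernoulli (δ : ℝ) : Measure ℝ :=
  ENNReal.ofReal δ • Measure.dirac 0 + ENNReal.ofReal (1 - δ) • Measure.dirac (1 - δ)⁻¹

lemma Continuous.integrable_of_ae_mem_isCompact {X : Type*} [TopologicalSpace X]
    [MeasurableSpace X] [OpensMeasurableSpace X] {μ : Measure X} [IsFiniteMeasure μ]
    {f : X → ℝ} (hf : Continuous f) {K : Set X} (hK : IsCompact K) (hμ : ∀ᵐ x ∂μ, x ∈ K) :
    Integrable f μ := by
  obtain ⟨C, hC⟩ := hK.exists_bound_of_continuousOn hf.continuousOn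
  exact .of_bound hf.aestronglyMeasurable C (hμ.mono hC)

lemma integral_pi_fin_succ {n : ℕ} {X E : Type*} [MeasurableSpace X] [NormedAddCommGroup E]
    [NormedSpace ℝ E] (μ : Fin (n + 1) → Measure X) [∀ i, SigmaFinite (μ i)]
    (F : (Fin (n + 1) → X) → E) :
    ∫ ξ, F ξ ∂Measure.pi μ =
      ∫ p, F (Fin.cons p.1 p.2) ∂(μ 0).prod (Measure.pi fun j => μ j.succ) := by
  rw [← (measurePreserving_piFinSuccAbove μ 0).symm.integral_comp']
  simp [MeasurableEquiv.piFinSuccAbove_symm_apply, Fin.insertNthEquiv, Fin.insertNth_zero']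

lemma ae_mem_univ_pi {ι : Type*} [Fintype ι] {X : ι → Type*} [∀ i, MeasurableSpace (X i)]
    {μ : ∀ i, Measure (X i)} [∀ i, SigmaFinite (μ i)] {S : ∀ i, Set (X i)}
    (h : ∀ i, ∀ᵐ x ∂(μ i), x ∈ S i) : ∀ᵐ ξ ∂Measure.pi μ, ξ ∈ Set.pi univ S :=
  (Filter.eventually_all.2 fun i => Measure.tendsto_eval_ae_ae.eventually (h i)).mono
    fun _ hξ i _ => hξ i

lemma Measure.ae_mem_prod {α β : Type*} [MeasurableSpace α] [MeasurableSpace β]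
    {μ : Measure α} {ν : Measure β} [SFinite ν] {s : Set α} {t : Set β}
    (hs : ∀ᵐ x ∂μ, x ∈ s) (ht : ∀ᵐ y ∂ν, y ∈ t) : ∀ᵐ p ∂μ.prod ν, p ∈ s ×ˢ t :=
  (Measure.quasiMeasurePreserving_fst.ae hs).and (Measure.quasiMeasurePreserving_snd.ae ht)

section Convexity

variable {E F : Type*} [AddCommGroup E] [Module ℝ E] [AddCommGroup F] [Module ℝ F]

lemma ConvexOn.comp_prodMk_right {f : E × F → ℝ} (hf : ConvexOn ℝ univ f) (y : F) :
    ConvexOn ℝ univ fun x => f (x, y) := by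
  refine ⟨convex_univ, fun x₁ _ x₂ _ a b ha hb hab => ?_⟩
  simpa [← add_smul, hab] using hf.2 (mem_univ (x₁, y)) (mem_univ (x₂, y)) ha hb hab

lemma ConvexOn.comp_prodMk_left {f : E × F → ℝ} (hf : ConvexOn ℝ univ f) (x : E) :
    ConvexOn ℝ univ fun y => f (x, y) := by
  refine ⟨convex_univ, fun y₁ _ y₂ _ a b ha hb hab => ?_⟩
  simpa [← add_smul, hab] using hf.2 (mem_univ (x, y₁)) (mem_univ (x, y₂)) ha hb hab

end Convexity

lemma ConvexOn.sub_mul_le_chord {f : ℝ → ℝ} {a b x : ℝ} (hf : ConvexOn ℝ (Icc a b) f)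
    (hx : x ∈ Icc a b) : (b - a) * f x ≤ (b - x) * f a + (x - a) * f b := by
  rcases (hx.1.trans hx.2).eq_or_lt with rfl | hab
  · obtain rfl : x = a := le_antisymm hx.2 hx.1
    simp
  have hba : 0 < b - a := sub_pos.2 hab
  have key := hf.2 (left_mem_Icc.2 hab.le) (right_mem_Icc.2 hab.le)
    (div_nonneg (sub_nonneg.2 hx.2) hba.le) (div_nonneg (sub_nonneg.2 hx.1) hba.le)
    (by rw [← add_div, sub_add_sub_cancel, div_self hba.ne'])
  have hpt : ((b - x) / (b - a)) • a + ((x - a) / (b - a)) • b = x := by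
    simp only [smul_eq_mul]; field_simp; ring
  rw [hpt, smul_eq_mul, smul_eq_mul] at key
  calc (b - a) * f x ≤ (b - a) * ((b - x) / (b - a) * f a + (x - a) / (b - a) * f b) :=
        mul_le_mul_of_nonneg_left key hba.le
    _ = (b - x) * f a + (x - a) * f b := by field_simp

lemma ConvexOn.integrable_of_ae_mem_isCompact {E : Type*} [NormedAddCommGroup E]
    [NormedSpace ℝ E] [FiniteDimensional ℝ E] [MeasurableSpace E] [OpensMeasurableSpace E]
    {μ : Measure E} [IsFiniteMeasure μ] {f : E → ℝ} (hf : ConvexOn ℝ univ f) {K : Set E}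
    (hK : IsCompact K) (hμ : ∀ᵐ x ∂μ, x ∈ K) : Integrable f μ :=
  hf.locallyLipschitz.continuous.integrable_of_ae_mem_isCompact hK hμ

lemma ConvexOn.integral_le_chord {μ : Measure ℝ} [IsProbabilityMeasure μ] {f : ℝ → ℝ}
    {a b : ℝ} (hf : ConvexOn ℝ (Icc a b) f) (hμ : ∀ᵐ x ∂μ, x ∈ Icc a b)
    (hfi : Integrable f μ) :
    (b - a) * ∫ x, f x ∂μ ≤ (b - ∫ x, x ∂μ) * f a + (∫ x, x ∂μ - a) * f b := by
  have hid : Integrable (fun x => x) μ :=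
    continuous_id.integrable_of_ae_mem_isCompact isCompact_Icc hμ
  have hb : Integrable (fun x => (b - x) * f a) μ := ((integrable_const b).sub hid).mul_const _
  have ha : Integrable (fun x => (x - a) * f b) μ := (hid.sub (integrable_const a)).mul_const _
  calc (b - a) * ∫ x, f x ∂μ = ∫ x, (b - a) * f x ∂μ := (integral_const_mul _ _).symm
    _ ≤ ∫ x, (b - x) * f a + (x - a) * f b ∂μ :=
        integral_mono_ae (hfi.const_mul _) (hb.add ha)
          (hμ.mono fun x hx => hf.sub_mul_le_chord hx)
    _ = (b - ∫ x, x ∂μ) * f a + (∫ x, x ∂μ - a) * f b := by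
        rw [integral_add hb ha, integral_mul_const, integral_mul_const,
          integral_sub (integrable_const b) hid, integral_sub hid (integrable_const a)]
        simp

section ScaledBernoulli

variable {δ : ℝ}

lemma isProbabilityMeasure_scaledBernoulli (h₀ : 0 ≤ δ) (h₁ : δ ≤ 1) :
    IsProbabilityMeasure (scaledBernoulli δ) := by
  constructor
  simp [scaledBernoulli, ← ENNReal.ofReal_add h₀ (sub_nonneg.2 h₁)]

lemma integral_scaledBernoulli (h₀ : 0 ≤ δ) (h₁ : δ ≤ 1) (f : ℝ → ℝ) :
    ∫ x, f x ∂scaledBernoulli δ = δ * f 0 + (1 - δ) * f (1 - δ)⁻¹ := by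
  rw [scaledBernoulli, integral_add_measure, integral_smul_measure, integral_smul_measure,
    integral_dirac, integral_dirac, ENNReal.toReal_ofReal h₀,
    ENNReal.toReal_ofReal (sub_nonneg.2 h₁), smul_eq_mul, smul_eq_mul]
  all_goals exact (integrable_dirac enorm_lt_top).smul_measure ENNReal.ofReal_ne_top

lemma ae_mem_Icc_scaledBernoulli (h₁ : δ ≤ 1) :
    ∀ᵐ x ∂scaledBernoulli δ, x ∈ Icc 0 (1 - δ)⁻¹ := by
  have hM : (0 : ℝ) ≤ (1 - δ)⁻¹ := inv_nonneg.2 (sub_nonneg.2 h₁)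
  refine ae_add_measure_iff.2 ⟨Measure.ae_smul_measure ?_ _, Measure.ae_smul_measure ?_ _⟩ <;>
    exact (ae_dirac_iff measurableSet_Icc).2 (by simp [hM])

lemma integral_id_scaledBernoulli (h₀ : 0 ≤ δ) (h₁ : δ < 1) :
    ∫ x, x ∂scaledBernoulli δ = 1 := by
  rw [integral_scaledBernoulli h₀ h₁.le fun x => x, mul_inv_cancel₀ (sub_pos.2 h₁).ne']
  ring

lemma integral_le_integral_scaledBernoulli (hδ : δ ∈ Ico 0 1) {Q : Measure ℝ}
    [IsProbabilityMeasure Q] (hQ : ∀ᵐ x ∂Q, x ∈ Icc 0 (1 - δ)⁻¹) (hmean : ∫ x, x ∂Q = 1)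
    {f : ℝ → ℝ} (hf : ConvexOn ℝ univ f) :
    ∫ x, f x ∂Q ≤ ∫ x, f x ∂scaledBernoulli δ := by
  have h1δ : 0 < 1 - δ := sub_pos.2 hδ.2
  have hchord := (hf.subset (subset_univ _) (convex_Icc _ _)).integral_le_chord hQ
    (hf.integrable_of_ae_mem_isCompact isCompact_Icc hQ)
  rw [hmean] at hchord
  rw [integral_scaledBernoulli hδ.1 hδ.2.le]
  have hscale : (1 - δ) * ((1 - δ)⁻¹ - 1) = δ := by field_simp; ring
  calc ∫ x, f x ∂Q = (1 - δ) * (((1 - δ)⁻¹ - 0) * ∫ x, f x ∂Q) := by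
        rw [sub_zero, ← mul_assoc, mul_inv_cancel₀ h1δ.ne', one_mul]
    _ ≤ (1 - δ) * (((1 - δ)⁻¹ - 1) * f 0 + (1 - 0) * f (1 - δ)⁻¹) :=
        mul_le_mul_of_nonneg_left hchord h1δ.le
    _ = δ * f 0 + (1 - δ) * f (1 - δ)⁻¹ := by linear_combination f 0 * hscale

end ScaledBernoulli

theorem integral_pi_le_integral_pi_scaledBernoulli {n : ℕ} {δ : Fin n → ℝ}
    (hδ : ∀ j, δ j ∈ Ico 0 1) {Q : Fin n → Measure ℝ} [∀ j, IsProbabilityMeasure (Q j)]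
    (hQ : ∀ j, ∀ᵐ x ∂(Q j), x ∈ Icc 0 (1 - δ j)⁻¹) (hmean : ∀ j, ∫ x, x ∂(Q j) = 1)
    {F : (Fin n → ℝ) → ℝ} (hF : ConvexOn ℝ univ F) :
    ∫ ξ, F ξ ∂Measure.pi Q ≤ ∫ ξ, F ξ ∂Measure.pi fun j => scaledBernoulli (δ j) := by
  induction n with
  | zero => rw [Measure.pi_of_empty, Measure.pi_of_empty]
  | succ n ih =>
    have := fun j => isProbabilityMeasure_scaledBernoulli (hδ j).1 (hδ j).2.le
    let G : ℝ × (Fin n → ℝ) → ℝ := fun p => F (Fin.cons p.1 p.2)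
    have hG : ConvexOn ℝ univ G :=
      hF.comp_linearMap (Fin.consLinearEquiv ℝ fun _ => ℝ).toLinearMap
    let K : Set (Fin n → ℝ) := Set.pi univ fun j => Icc 0 (1 - δ j.succ)⁻¹
    have hint : ∀ (μ : Measure ℝ) (ν : Measure (Fin n → ℝ)) [IsProbabilityMeasure μ]
        [IsProbabilityMeasure ν], (∀ᵐ x ∂μ, x ∈ Icc 0 (1 - δ 0)⁻¹) → (∀ᵐ y ∂ν, y ∈ K) →
        Integrable G (μ.prod ν) :=
      fun _ _ _ _ hμ hν => hG.integrable_of_ae_mem_isCompact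
        (isCompact_Icc.prod (isCompact_univ_pi fun _ => isCompact_Icc)) (Measure.ae_mem_prod hμ hν)
    let B := scaledBernoulli (δ 0)
    let ν : Measure (Fin n → ℝ) := Measure.pi fun j => Q j.succ
    let ν' : Measure (Fin n → ℝ) := Measure.pi fun j => scaledBernoulli (δ j.succ)
    have hB := ae_mem_Icc_scaledBernoulli (hδ 0).2.le
    have hν : ∀ᵐ y ∂ν, y ∈ K := ae_mem_univ_pi fun j => hQ j.succ
    have hν' : ∀ᵐ y ∂ν', y ∈ K :=
      ae_mem_univ_pi fun j => ae_mem_Icc_scaledBernoulli (hδ j.succ).2.le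
    have hslice (x : ℝ) : ∫ y, G (x, y) ∂ν ≤ ∫ y, G (x, y) ∂ν' :=
      ih (fun j => hδ j.succ) (fun j => hQ j.succ) (fun j => hmean j.succ)
        (hG.comp_prodMk_left x)
    calc ∫ ξ, F ξ ∂Measure.pi Q
        = ∫ p, G p ∂(Q 0).prod ν := integral_pi_fin_succ Q F
      _ = ∫ y, ∫ x, G (x, y) ∂(Q 0) ∂ν := integral_prod_symm G (hint _ _ (hQ 0) hν)
      _ ≤ ∫ y, ∫ x, G (x, y) ∂B ∂ν :=
          integral_mono (hint _ _ (hQ 0) hν).integral_prod_right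
            (hint _ _ hB hν).integral_prod_right fun y => integral_le_integral_scaledBernoulli
              (hδ 0) (hQ 0) (hmean 0) (hG.comp_prodMk_right y)
      _ = ∫ x, ∫ y, G (x, y) ∂ν ∂B := (integral_integral_swap (hint _ _ hB hν)).symm
      _ ≤ ∫ x, ∫ y, G (x, y) ∂ν' ∂B := by
          simp only [B, integral_scaledBernoulli (hδ 0).1 (hδ 0).2.le]
          exact add_le_add (mul_le_mul_of_nonneg_left (hslice _) (hδ 0).1)
            (mul_le_mul_of_nonneg_left (hslice _) (sub_nonneg.2 (hδ 0).2.le))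
      _ = ∫ p, G p ∂B.prod ν' := (integral_prod G (hint _ _ hB hν')).symm
      _ = ∫ ξ, F ξ ∂Measure.pi fun j => scaledBernoulli (δ j) :=
          (integral_pi_fin_succ (fun j => scaledBernoulli (δ j)) F).symm

theorem dropout_worst_case_product_general
    (d : ℕ) (θ : Fin d → ℝ) (δ : Fin d → ℝ) (hδ : ∀ j, δ j ∈ Ioo (0 : ℝ) 1)
    (A : ℝ → ℝ) (hconv : ConvexOn ℝ univ A) :
    IsGreatest
      {r : ℝ | ∃ Q : Fin d → Measure ℝ,
        (∀ j, IsProbabilityMeasure (Q j)) ∧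
        (∀ j, ∀ᵐ x ∂(Q j), x ∈ Icc (0 : ℝ) (1 - δ j)⁻¹) ∧
        (∀ j, (∫ x, x ∂(Q j)) = 1) ∧
        r = ∫ ξ, A (∑ j, θ j * ξ j) ∂(Measure.pi Q)}
      (∫ ξ, A (∑ j, θ j * ξ j) ∂(Measure.pi fun j => scaledBernoulli (δ j))) := by
  have hδ' : ∀ j, δ j ∈ Ico 0 1 := fun j => Ioo_subset_Ico_self (hδ j)
  refine ⟨⟨_, fun j => isProbabilityMeasure_scaledBernoulli (hδ' j).1 (hδ' j).2.le,
    fun j => ae_mem_Icc_scaledBernoulli (hδ' j).2.le,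
    fun j => integral_id_scaledBernoulli (hδ' j).1 (hδ' j).2, rfl⟩, ?_⟩
  rintro _ ⟨Q, hQ, hsupp, hmean, rfl⟩
  exact integral_pi_le_integral_pi_scaledBernoulli hδ' hsupp hmean
    (hconv.comp_linearMap (dotProductBilin ℝ ℝ θ))

theorem dropout_worst_case_product
    (d : ℕ) (θ : Fin d → ℝ) (δ : Fin d → ℝ) (hδ : ∀ j, δ j ∈ Ioo (0 : ℝ) 1)
    (A : ℝ → ℝ) (hconv : ConvexOn ℝ univ A) (hcont : Continuous A) :
    IsGreatest
      {r : ℝ | ∃ Q : Fin d → Measure ℝ,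
        (∀ j, IsProbabilityMeasure (Q j)) ∧
        (∀ j, ∀ᵐ x ∂(Q j), x ∈ Icc (0 : ℝ) (1 - δ j)⁻¹) ∧
        (∀ j, (∫ x, x ∂(Q j)) = 1) ∧
        r = ∫ ξ, A (∑ j, θ j * ξ j) ∂(Measure.pi Q)}
      (∫ ξ, A (∑ j, θ j * ξ j) ∂(Measure.pi fun j => scaledBernoulli (δ j))) :=
  dropout_worst_case_product_general d θ δ hδ A hconv
end

section
/- Let $\delta\in(0,1)$, $\beta \in \mathbb{R}^d$, and let $x_1,\dots,x_n \in \mathbb{R}^d$, $y_1,\dots,y_n \in \mathbb{R}$. Let $\xi$ be a random vector with independent coordinates distributed as $(1-\delta)^{-1}\times\mathrm{Bernoulli}(1-\delta)$. Then $\frac{1}{n}\sum_{i=1}^n \mathbb{E}\big[(\beta^\top(x_i\odot\xi) - y_i)^2\big] = \frac{1}{n}\big[(\mathbf{Y}-\mathbf{X}\beta)^\top(\mathbf{Y}-\mathbf{X}\beta) + \frac{\delta}{1-\delta}\beta^\top\mathrm{diag}(\mathbf{X}^\top\mathbf{X})\beta\big]$, where $\mathbf{X}$ has rows $x_i^\top$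 and $\mathbf{Y} = (y_1,\dots,y_n)^\top$. -/
/-!
For independent coordinates `ξ j` with mean `m` and variance `v`, the bias–variance split
`E[Z²] = Var Z + (E Z)²` applied to `Z = ∑ j, a j * ξ j - c` gives
`E[Z²] = (m * ∑ j, a j - c)² + v * ∑ j, a j²`. Dropout noise has `m = 1` and `v = δ / (1 - δ)`;
taking `a j = β j * x i j`, `c = y i` and summing over the samples `i` yields the residual sum
of squares plus `δ / (1 - δ) * ∑ j, β j² * (XᵀX) j j`.
-/

open MeasureTheory Matrix Set

open ProbabilityTheory unitInterval

namespace ProbabilityTheory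

lemma integral_sq_eq_variance_add_sq {Ω : Type*} {mΩ : MeasurableSpace Ω} {μ : Measure Ω}
    [IsProbabilityMeasure μ] {X : Ω → ℝ} (hX : MemLp X 2 μ) :
    ∫ ω, X ω ^ 2 ∂μ = Var[X; μ] + (∫ ω, X ω ∂μ) ^ 2 := by
  rw [variance_eq_sub hX]
  simp [Pi.pow_apply]

lemma integral_sq_sum_mul_sub_pi {ι : Type*} [Fintype ι] {μ : Measure ℝ} [IsProbabilityMeasure μ]
    (hμ : MemLp id 2 μ) (a : ι → ℝ) (c : ℝ) :
    ∫ ξ, (∑ j, a j * ξ j - c) ^ 2 ∂(Measure.pi fun _ ↦ μ)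
      = ((∫ t, t ∂μ) * ∑ j, a j - c) ^ 2 + Var[id; μ] * ∑ j, a j ^ 2 := by
  have hcoord (j : ι) : MemLp (fun ξ : ι → ℝ ↦ a j * ξ j) 2 (Measure.pi fun _ ↦ μ) :=
    (hμ.const_mul (a j)).comp_measurePreserving (measurePreserving_eval _ j)
  have hsum : MemLp (fun ξ : ι → ℝ ↦ ∑ j, a j * ξ j) 2 (Measure.pi fun _ ↦ μ) :=
    memLp_finsetSum _ fun j _ ↦ hcoord j
  have hZ : MemLp (fun ξ : ι → ℝ ↦ ∑ j, a j * ξ j - c) 2 (Measure.pi fun _ ↦ μ) :=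
    hsum.sub (memLp_const c)
  have hmean : ∫ ξ, (∑ j, a j * ξ j - c) ∂(Measure.pi fun _ ↦ μ)
      = (∫ t, t ∂μ) * ∑ j, a j - c := by
    rw [integral_sub (hsum.integrable one_le_two) (integrable_const c),
      integral_finsetSum _ fun j _ ↦ (hcoord j).integrable one_le_two]
    simp only [integral_const_mul, integral_eval, integral_const, probReal_univ, one_smul,
      ← Finset.sum_mul, mul_comm]
  have hvar : Var[fun ξ ↦ ∑ j, a j * ξ j - c; Measure.pi fun _ ↦ μ]
      = Var[id; μ] * ∑ j, a j ^ 2 := by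
    have := variance_sum_pi (μ := fun _ : ι ↦ μ) fun j ↦ hμ.const_mul (a j)
    simp only [Finset.sum_fn, id] at this
    rw [variance_sub_const hsum.aestronglyMeasurable, this, Finset.mul_sum]
    exact Finset.sum_congr rfl fun j _ ↦ (variance_const_mul (a j) id μ).trans (mul_comm _ _)
  rw [integral_sq_eq_variance_add_sq hZ, hvar, hmean]
  ring

lemma variance_id_bernoulliMeasure (x y : ℝ) (p : I) :
    Var[id; Ber(x, y, p)] = p * (1 - p) * (x - y) ^ 2 := by
  rw [variance_eq_integral measurable_id.aemeasurable, integral_bernoulliMeasure,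
    integral_bernoulliMeasure]
  simp only [id, smul_eq_mul]
  ring

lemma memLp_id_bernoulliMeasure (x y : ℝ) (p : I) : MemLp id 2 Ber(x, y, p) :=
  (memLp_two_iff_integrable_sq aestronglyMeasurable_id).2 (integrable_bernoulliMeasure x y p _)

end ProbabilityTheory

lemma scaledBernoulli_eq_bernoulliMeasure {δ : ℝ} (hδ : δ ∈ I) :
    scaledBernoulli δ = Ber(0, (1 - δ)⁻¹, ⟨δ, hδ⟩) := by
  rw [scaledBernoulli, bernoulliMeasure_def]
  congr 2 <;> rw [ENNReal.ofReal] <;> congr 1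
  · ext; simp [hδ.1]
  · ext; simp [hδ.2]

lemma integral_sq_sum_mul_sub_scaledBernoulli {δ : ℝ} (h0 : 0 ≤ δ) (h1 : δ < 1) {ι : Type*}
    [Fintype ι] (a : ι → ℝ) (c : ℝ) :
    ∫ ξ, (∑ j, a j * ξ j - c) ^ 2 ∂(Measure.pi fun _ : ι ↦ scaledBernoulli δ)
      = (∑ j, a j - c) ^ 2 + δ / (1 - δ) * ∑ j, a j ^ 2 := by
  have hδ : δ ∈ I := ⟨h0, h1.le⟩
  have hmean : ∫ t, t ∂Ber(0, (1 - δ)⁻¹, ⟨δ, hδ⟩) = 1 := by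
    rw [integral_bernoulliMeasure]
    simpa using mul_inv_cancel₀ (sub_pos.2 h1).ne'
  have hvar : Var[id; Ber(0, (1 - δ)⁻¹, ⟨δ, hδ⟩)] = δ / (1 - δ) := by
    rw [variance_id_bernoulliMeasure]
    field_simp [(sub_pos.2 h1).ne']
    simp
  rw [scaledBernoulli_eq_bernoulliMeasure hδ,
    integral_sq_sum_mul_sub_pi (memLp_id_bernoulliMeasure _ _ _), hmean, hvar, one_mul]

namespace Matrix

variable {m n R : Type*} [Fintype m] [Fintype n] [CommRing R]

lemma dotProduct_self_sub_mulVec (A : Matrix m n R) (v : n → R) (w : m → R) :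
    (w - A *ᵥ v) ⬝ᵥ (w - A *ᵥ v) = ∑ i, (∑ j, v j * A i j - w i) ^ 2 := by
  refine Finset.sum_congr rfl fun i _ ↦ ?_
  simp only [Pi.sub_apply, mulVec, dotProduct, mul_comm (A i _)]
  ring

lemma dotProduct_diagonal_gram_mulVec [DecidableEq n] (A : Matrix m n R) (v : n → R) :
    v ⬝ᵥ (diagonal fun j ↦ (Aᵀ * A) j j) *ᵥ v = ∑ i, ∑ j, (v j * A i j) ^ 2 := by
  simp only [dotProduct, mulVec_diagonal, mul_apply, transpose_apply, Finset.mul_sum,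
    Finset.sum_mul]
  rw [Finset.sum_comm]
  exact Finset.sum_congr rfl fun j _ ↦ Finset.sum_congr rfl fun i _ ↦ by ring

end Matrix

theorem dropout_empirical_objective_identity_general
    (n d : ℕ) (δ : ℝ) (hδ : δ ∈ Ioo (0 : ℝ) 1)
    (β : Fin d → ℝ) (x : Fin n → Fin d → ℝ) (y : Fin n → ℝ)
    (X : Matrix (Fin n) (Fin d) ℝ) (hX : X = Matrix.of x) (Y : Fin n → ℝ) (hY : Y = y) :
    (1 / (n : ℝ)) * ∑ i, (∫ ξ, (∑ j, β j * (x i j * ξ j) - y i) ^ 2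
        ∂(Measure.pi fun _ : Fin d => scaledBernoulli δ))
      = (1 / (n : ℝ)) *
        ((Y - X.mulVec β) ⬝ᵥ (Y - X.mulVec β) +
          (δ / (1 - δ)) * (β ⬝ᵥ (Matrix.diagonal fun j => (Xᵀ * X) j j).mulVec β)) := by
  subst hX hY
  simp_rw [← mul_assoc, integral_sq_sum_mul_sub_scaledBernoulli hδ.1.le hδ.2]
  rw [dotProduct_self_sub_mulVec, dotProduct_diagonal_gram_mulVec, Finset.sum_add_distrib,
    Finset.mul_sum]

theorem dropout_empirical_objective_identity
    (n d : ℕ) (hn : 0 < n) (δ : ℝ) (hδ : δ ∈ Ioo (0 : ℝ) 1)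
    (β : Fin d → ℝ) (x : Fin n → Fin d → ℝ) (y : Fin n → ℝ)
    (X : Matrix (Fin n) (Fin d) ℝ) (hX : X = Matrix.of x) (Y : Fin n → ℝ) (hY : Y = y) :
    (1 / (n : ℝ)) * ∑ i, (∫ ξ, (∑ j, β j * (x i j * ξ j) - y i) ^ 2
        ∂(Measure.pi fun _ : Fin d => scaledBernoulli δ))
      = (1 / (n : ℝ)) *
        ((Y - X.mulVec β) ⬝ᵥ (Y - X.mulVec β) +
          (δ / (1 - δ)) * (β ⬝ᵥ (Matrix.diagonal fun j => (Xᵀ * X) j j).mulVec β)) :=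
  dropout_empirical_objective_identity_general n d δ hδ β x y X hX Y hY
end

section
/- Let $K^*$ be a random variable on integers $\ge m_0$ with $\mathbb{P}(K^* = K) = r(1-r)^{K-m_0}$ where $r \in (1/2, 3/4)$. Suppose $(\bar\Delta_K)_{K\ge m_0}$ are random vectors in $\mathbb{R}^d$, independent of $K^*$, satisfying $\mathbb{E}[\|\bar\Delta_K\|_2^2] \le C\, 2^{-2K}$ for some constant $C$, and let $\theta_0$ be a bounded random vector with $\|\theta_0\|_2 \le M$ almost surely. Then the randomized estimator $Z = \bar\Delta_{K^*}/\mathbb{P}(K^*=K^*) + \theta_0$ (i.e., $Z = \bar\Delta_K/p(K) + \theta_0$ on the event $K^*=K$) satisfies $\mathbb{E}[\|Z\|_2^2] < \infty$. -/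
/-!
Since `K*` is independent of the family `Δ`, conditioning on `K* = K` gives
`E‖Δ_{K*} / p(K*)‖² = ∑_K P(K* = K) p(K)⁻² E‖Δ_K‖²`. For `K ≥ m₀` the term is
`E‖Δ_K‖² / p(K) ≤ C / (r 4^{m₀}) · (4(1 - r))^{-(K - m₀)}`, a geometric tail of ratio `< 1`
exactly because `r < 3/4`. Hence `Δ_{K*} / p(K*) ∈ L²`, the bounded `θ₀` is in `L²` too, and so
is their sum `Z`.
-/

open MeasureTheory ProbabilityTheory

section

variable {Ω ι β : Type*} [MeasurableSpace Ω] {μ : Measure Ω} [IsFiniteMeasure μ]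
  [Countable ι] [MeasurableSpace ι] [MeasurableSingletonClass ι] [MeasurableSpace β]

theorem lintegral_comp_eq_tsum_of_indepFun {K : Ω → ι} {Y : Ω → β} (hK : Measurable K)
    (hY : Measurable Y) (hKY : IndepFun K Y μ) {g : ι → β → ENNReal}
    (hg : ∀ k, Measurable (g k)) :
    ∫⁻ ω, g (K ω) (Y ω) ∂μ = ∑' k, μ (K ⁻¹' {k}) * ∫⁻ ω, g k (Y ω) ∂μ := by
  have hg' : Measurable (Function.uncurry g) := measurable_from_prod_countable_right hg
  calc ∫⁻ ω, g (K ω) (Y ω) ∂μ = ∫⁻ z, Function.uncurry g z ∂(μ.map fun ω => (K ω, Y ω)) :=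
        (lintegral_map hg' (hK.prodMk hY)).symm
    _ = ∫⁻ k, ∫⁻ y, g k y ∂(μ.map Y) ∂(μ.map K) := by
        rw [(indepFun_iff_map_prod_eq_prod_map_map hK.aemeasurable hY.aemeasurable).1 hKY,
          lintegral_prod _ hg'.aemeasurable]
        rfl
    _ = ∑' k, μ (K ⁻¹' {k}) * ∫⁻ ω, g k (Y ω) ∂μ := by
        rw [lintegral_countable']
        refine tsum_congr fun k => ?_
        rw [Measure.map_apply hK (measurableSet_singleton k), lintegral_map (hg k) hY, mul_comm]

end

section

variable {Ω E : Type*} [MeasurableSpace Ω] {μ : Measure Ω} [NormedAddCommGroup E]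
  [NormedSpace ℝ E]

theorem lintegral_ofReal_sq_norm_smul {X : Ω → E} (hX : Integrable (fun ω => ‖X ω‖ ^ 2) μ)
    (c : ℝ) :
    ∫⁻ ω, ENNReal.ofReal (‖c • X ω‖ ^ 2) ∂μ = ENNReal.ofReal (c ^ 2 * ∫ ω, ‖X ω‖ ^ 2 ∂μ) := by
  simp_rw [norm_smul, mul_pow, Real.norm_eq_abs, sq_abs]
  rw [← integral_const_mul, ofReal_integral_eq_lintegral_ofReal (hX.const_mul _)
    (ae_of_all _ fun ω => by positivity)]

variable [IsFiniteMeasure μ] [MeasurableSpace E] [BorelSpace E] [SecondCountableTopology E] in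
theorem memLp_two_smul_comp_of_indepFun {K : Ω → ℕ} {X : ℕ → Ω → E} (w : ℕ → ℝ)
    (hK : Measurable K) (hX : ∀ k, Measurable (X k))
    (hKX : IndepFun K (fun ω k => X k ω) μ) (hX2 : ∀ k, Integrable (fun ω => ‖X k ω‖ ^ 2) μ)
    (hsum : Summable fun k => μ.real (K ⁻¹' {k}) * (w k ^ 2 * ∫ ω, ‖X k ω‖ ^ 2 ∂μ)) :
    MemLp (fun ω => w (K ω) • X (K ω) ω) 2 μ := by
  have hmeas : Measurable fun ω => w (K ω) • X (K ω) ω :=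
    (measurable_from_prod_countable_right (f := fun z : ℕ × Ω => w z.1 • X z.1 z.2)
      fun k => (continuous_const_smul (w k)).measurable.comp (hX k)).comp
        (hK.prodMk measurable_id)
  refine (memLp_two_iff_integrable_sq_norm hmeas.aestronglyMeasurable).2
    ⟨(hmeas.norm.pow_const 2).aestronglyMeasurable, ?_⟩
  rw [hasFiniteIntegral_iff_ofReal (ae_of_all _ fun ω => by positivity)]
  have hsplit := lintegral_comp_eq_tsum_of_indepFun hK (measurable_pi_lambda _ hX) hKX
    (g := fun k x => ENNReal.ofReal (‖w k • x k‖ ^ 2)) fun k =>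
      (((continuous_const_smul (w k)).measurable.comp (measurable_pi_apply k)).norm.pow_const
        2).ennreal_ofReal
  rw [hsplit]
  simp_rw [lintegral_ofReal_sq_norm_smul (hX2 _)]
  have hterm (k : ℕ) : μ (K ⁻¹' {k}) * ENNReal.ofReal (w k ^ 2 * ∫ ω, ‖X k ω‖ ^ 2 ∂μ) =
      ENNReal.ofReal (μ.real (K ⁻¹' {k}) * (w k ^ 2 * ∫ ω, ‖X k ω‖ ^ 2 ∂μ)) := by
    rw [ENNReal.ofReal_mul measureReal_nonneg, ofReal_measureReal]
  have hnonneg (k : ℕ) : 0 ≤ μ.real (K ⁻¹' {k}) * (w k ^ 2 * ∫ ω, ‖X k ω‖ ^ 2 ∂μ) := by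
    have : 0 ≤ ∫ ω, ‖X k ω‖ ^ 2 ∂μ := integral_nonneg fun ω => sq_nonneg _
    positivity
  simp_rw [hterm, ← ENNReal.ofReal_tsum_of_nonneg hnonneg hsum]
  exact ENNReal.ofReal_lt_top

end

theorem mul_inv_sq_mul_dyadic_eq_geometric {r : ℝ} (hr : r ≠ 0) (hr1 : 1 - r ≠ 0) (C : ℝ)
    (m0 j : ℕ) :
    r * (1 - r) ^ j * ((r * (1 - r) ^ j)⁻¹ ^ 2 * (C * ((2 : ℝ) ^ (j + m0))⁻¹ ^ 2)) =
      C / (r * 4 ^ m0) * (4 * (1 - r))⁻¹ ^ j := by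
  simp only [inv_pow, mul_pow, ← pow_mul, pow_add, show (4 : ℝ) = 2 ^ 2 by norm_num]
  field_simp
  ring

theorem randomized_mlmc_finite_second_moment_general
    (d m0 : ℕ) (r : ℝ) (hr : 1 / 2 < r) (hr' : r < 3 / 4)
    {Ω : Type*} [MeasurableSpace Ω] (μ : Measure Ω) [IsProbabilityMeasure μ]
    (Kstar : Ω → ℕ) (hKmeas : Measurable Kstar)
    (hKlaw : ∀ K : ℕ, m0 ≤ K → μ {ω | Kstar ω = K} = ENNReal.ofReal (r * (1 - r) ^ (K - m0)))
    (Δ : ℕ → Ω → EuclideanSpace ℝ (Fin d))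
    (hΔmeas : ∀ K, Measurable (Δ K))
    (θ0 : Ω → EuclideanSpace ℝ (Fin d)) (hθmeas : Measurable θ0)
    (hindep : IndepFun Kstar (fun ω => (fun K => Δ K ω, θ0 ω)) μ)
    (C : ℝ) (hC : ∀ K : ℕ, (∫ ω, ‖Δ K ω‖ ^ 2 ∂μ) ≤ C * ((2 : ℝ) ^ K)⁻¹ ^ 2)
    (hΔint : ∀ K, Integrable (fun ω => ‖Δ K ω‖ ^ 2) μ)
    (M : ℝ) (hM : ∀ᵐ ω ∂μ, ‖θ0 ω‖ ≤ M)
    (Z : Ω → EuclideanSpace ℝ (Fin d))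
    (hZ : Z = fun ω => (r * (1 - r) ^ (Kstar ω - m0))⁻¹ • Δ (Kstar ω) ω + θ0 ω) :
    Integrable (fun ω => ‖Z ω‖ ^ 2) μ := by
  have hr0 : 0 < r := by linarith
  have h1r : 0 < 1 - r := by linarith
  have hlaw (j : ℕ) : μ.real (Kstar ⁻¹' {j + m0}) = r * (1 - r) ^ j := by
    rw [measureReal_def, show Kstar ⁻¹' {j + m0} = {ω | Kstar ω = j + m0} from rfl,
      hKlaw _ (Nat.le_add_left m0 j), Nat.add_sub_cancel, ENNReal.toReal_ofReal (by positivity)]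
  have hq : (4 * (1 - r))⁻¹ < 1 := by
    rw [inv_lt_one₀ (by positivity)]
    linarith
  have hsum : Summable fun k => μ.real (Kstar ⁻¹' {k}) *
      ((r * (1 - r) ^ (k - m0))⁻¹ ^ 2 * ∫ ω, ‖Δ k ω‖ ^ 2 ∂μ) := by
    rw [← summable_nat_add_iff m0]
    refine Summable.of_nonneg_of_le (fun j => ?_) (fun j => ?_)
      ((summable_geometric_of_lt_one (by positivity) hq).mul_left (C / (r * 4 ^ m0)))
    · have : 0 ≤ ∫ ω, ‖Δ (j + m0) ω‖ ^ 2 ∂μ := integral_nonneg fun ω => sq_nonneg _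
      positivity
    · rw [hlaw, Nat.add_sub_cancel, ← mul_inv_sq_mul_dyadic_eq_geometric hr0.ne' h1r.ne']
      gcongr
      exact hC _
  have hf := memLp_two_smul_comp_of_indepFun (fun k => (r * (1 - r) ^ (k - m0))⁻¹) hKmeas hΔmeas
    (hindep.comp measurable_id measurable_fst) hΔint hsum
  have hθ : MemLp θ0 2 μ := MemLp.of_bound hθmeas.aestronglyMeasurable M hM
  subst hZ
  exact (memLp_two_iff_integrable_sq_norm (hf.add hθ).1).1 (hf.add hθ)

theorem randomized_mlmc_finite_second_moment
    (d m0 : ℕ) (r : ℝ) (hr : 1 / 2 < r) (hr' : r < 3 / 4)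
    {Ω : Type*} [MeasurableSpace Ω] (μ : Measure Ω) [IsProbabilityMeasure μ]
    (Kstar : Ω → ℕ) (hKmeas : Measurable Kstar)
    (hKge : ∀ᵐ ω ∂μ, m0 ≤ Kstar ω)
    (hKlaw : ∀ K : ℕ, m0 ≤ K → μ {ω | Kstar ω = K} = ENNReal.ofReal (r * (1 - r) ^ (K - m0)))
    (Δ : ℕ → Ω → EuclideanSpace ℝ (Fin d))
    (hΔmeas : ∀ K, Measurable (Δ K))
    (θ0 : Ω → EuclideanSpace ℝ (Fin d)) (hθmeas : Measurable θ0)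
    (hindep : IndepFun Kstar (fun ω => (fun K => Δ K ω, θ0 ω)) μ)
    (C : ℝ) (hC : ∀ K : ℕ, (∫ ω, ‖Δ K ω‖ ^ 2 ∂μ) ≤ C * ((2 : ℝ) ^ K)⁻¹ ^ 2)
    (hΔint : ∀ K, Integrable (fun ω => ‖Δ K ω‖ ^ 2) μ)
    (M : ℝ) (hM : ∀ᵐ ω ∂μ, ‖θ0 ω‖ ≤ M)
    (Z : Ω → EuclideanSpace ℝ (Fin d))
    (hZ : Z = fun ω => (r * (1 - r) ^ (Kstar ω - m0))⁻¹ • Δ (Kstar ω) ω + θ0 ω) :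
    Integrable (fun ω => ‖Z ω‖ ^ 2) μ :=
  randomized_mlmc_finite_second_moment_general d m0 r hr hr' μ Kstar hKmeas hKlaw Δ hΔmeas θ0 hθmeas
    hindep C hC hΔint M hM Z hZ
end
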